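/- Let K/k be a function field extension in characteristic zero (K finitely generated as a field over k), let δ : K → K be a k-linear derivation, and let R ⊆ K be a finitely generated k-subalgebra. Then there exists a finitely generated k-algebra extension R′ of R inside K such that δ(R′) ⊆ R′, i.e. δ restricts to a differential ring structure on R′. -/
import Mathlib


/-!
# Lemma 2.2: a derivation restricts to a finitely generated model

If `K/k` is a function field extension (a finitely generated field extension) in
characteristic zero, `δ` is a `k`-linear derivation on `K`, and `R ⊆ K` is a finitely
generated `k`-subalgebra, then some finitely generated `k`-subalgebra `R′ ⊇ R` of `K` is
closed under `δ`.
-/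

theorem derivation_restricts_to_fg_subalgebra
    (k K : Type*) [Field k] [Field K] [CharZero K] [Algebra k K]
    -- `K/k` is a function field extension: finitely generated as a field extension
    (hfg : (⊤ : IntermediateField k K).FG)
    (δ : Derivation k K K)
    (R : Subalgebra k K) (hR : R.FG) :
    ∃ R' : Subalgebra k K, R ≤ R' ∧ R'.FG ∧ ∀ x ∈ R', δ x ∈ R' := by
  classical
  obtain ⟨t, ht⟩ := hfg
  obtain ⟨s, hs⟩ := hR
  set v : Finset K := s ∪ t with hv
  set A : Subalgebra k K := Algebra.adjoin k (v : Set K) with hA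
  -- every element of K is a quotient of elements of A
  have hK : ∀ x : K, ∃ p q : K, p ∈ A ∧ q ∈ A ∧ q ≠ 0 ∧ x = p / q := by
    intro x
    have hx : x ∈ IntermediateField.adjoin k (v : Set K) := by
      have hle : (⊤ : IntermediateField k K) ≤ IntermediateField.adjoin k (v : Set K) := by
        rw [← ht]
        apply IntermediateField.adjoin.mono
        intro y hy
        simp only [hv, Finset.coe_union, Set.mem_union]
        exact Or.inr hy
      exact hle (by trivial)
    rw [IntermediateField.mem_adjoin_iff] at hx
    obtain ⟨r, s', hx⟩ := hx
    have hmem : ∀ w : MvPolynomial ((v : Set K) : Type _) k,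
        MvPolynomial.aeval (Subtype.val) w ∈ A := by
      intro w
      rw [hA, Algebra.adjoin_eq_range]
      exact ⟨w, rfl⟩
    by_cases hz : MvPolynomial.aeval (Subtype.val) s' = 0
    · refine ⟨0, 1, A.zero_mem, A.one_mem, one_ne_zero, ?_⟩
      rw [hx, hz, div_zero, zero_div]
    · exact ⟨_, _, hmem r, hmem s', hz, hx⟩
  -- choose numerators/denominators for the derivatives of the generators
  have hchoice : ∀ g : K, ∃ p q : K, p ∈ A ∧ q ∈ A ∧ q ≠ 0 ∧ δ g = p / q := fun g => hK (δ g)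
  choose p q hp hq hq0 hd using hchoice
  set c : K := ∏ g ∈ v, q g with hc
  have hcA : c ∈ A := A.prod_mem fun g _ => hq g
  have hc0 : c ≠ 0 := Finset.prod_ne_zero_iff.2 fun g _ => hq0 g
  set R' : Subalgebra k K := Algebra.adjoin k ((v : Set K) ∪ {c⁻¹}) with hR'
  have hAle : A ≤ R' := Algebra.adjoin_mono (Set.subset_union_left)
  have hcinv : c⁻¹ ∈ R' := Algebra.subset_adjoin (Set.mem_union_right _ rfl)
  -- derivatives of generators land in R'
  have hgen : ∀ g ∈ v, δ g ∈ R' := by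
    intro g hg
    have key : δ g * c = p g * ∏ h ∈ v.erase g, q h := by
      rw [hd g, hc, ← Finset.mul_prod_erase v q hg, ← mul_assoc,
        div_mul_cancel₀ _ (hq0 g)]
    have hmem : δ g * c ∈ A := by
      rw [key]
      exact A.mul_mem (hp g) (A.prod_mem fun h _ => hq h)
    have : δ g = (δ g * c) * c⁻¹ := by
      field_simp
    rw [this]
    exact R'.mul_mem (hAle hmem) hcinv
  -- derivatives of elements of A land in R'
  have hAder : ∀ x ∈ A, δ x ∈ R' := by
    intro x hx
    induction hx using Algebra.adjoin_induction with
    | mem g hg => exact hgen g hg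
    | algebraMap a => simp only [Derivation.map_algebraMap]; exact R'.zero_mem
    | add x y hx hy ihx ihy => rw [map_add]; exact R'.add_mem ihx ihy
    | mul x y hx hy ihx ihy =>
        rw [Derivation.leibniz, smul_eq_mul, smul_eq_mul]
        exact R'.add_mem (R'.mul_mem (hAle hx) ihy) (R'.mul_mem (hAle hy) ihx)
  refine ⟨R', ?_, ?_, ?_⟩
  · rw [← hs]
    refine le_trans (Algebra.adjoin_mono ?_) hAle
    intro y hy
    simp only [hv, Finset.coe_union, Set.mem_union]
    exact Or.inl hy
  · exact ⟨v ∪ {c⁻¹}, by rw [Finset.coe_union, Finset.coe_singleton, hR']⟩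
  · intro x hx
    induction hx using Algebra.adjoin_induction with
    | mem g hg =>
        rcases hg with hg | hg
        · exact hgen g hg
        · rcases hg with rfl
          rw [Derivation.leibniz_inv, smul_eq_mul]
          have : δ c ∈ R' := hAder c hcA
          have h2 : (-c⁻¹ ^ 2 : K) ∈ R' := by
            apply R'.neg_mem
            exact R'.pow_mem hcinv 2
          exact R'.mul_mem h2 this
    | algebraMap a => simp only [Derivation.map_algebraMap]; exact R'.zero_mem
    | add x y hx hy ihx ihy => rw [map_add]; exact R'.add_mem ihx ihy
    | mul x y hx hy ihx ihy =>
        rw [Derivation.leibniz, smul_eq_mul, smul_eq_mul]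
        exact R'.add_mem (R'.mul_mem hx ihy) (R'.mul_mem hy ihx)
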